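/- Let μ be an atomless probability measure on ℝ with cumulative distribution function F, let k ≥ 1 be an integer, and let ν be the probability measure on ℝ whose cumulative distribution function is F^{1/k}. Then ν is absolutely continuous with respect to μ with density x ↦ (1/k)·F(x)^{(1/k) − 1} (the density may be set to 0 on the set {x : F(x) = 0}, which is μ-null): for every Borel set A ⊆ ℝ, ν(A) = ∫_A (1/k) F(x)^{(1/k) − 1} dμ(x). -/

import Mathlib

open MeasureTheory
open scoped ENNReal

/-- The cumulative distribution function of a measure on `ℝ`. -/
noncomputable def cdf' (μ : Measure ℝ) : ℝ → ℝ := fun x => (μ (Set.Iic x)).toReal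

/-!
Write `F` for the distribution function of `μ`. Since `μ` has no atoms, `F` pushes `μ` forward to
Lebesgue measure on `[0, 1]`: a compact `K ⊆ {F ≤ y}` lies in `Iic (sSup K)`, so
`μ {F ≤ y} ≤ y` by inner regularity, and symmetrically `μ {F > y} ≤ 1 - y`. As `Iic x` and
`{F ≤ F x}` differ by a `μ`-null set, the change of variables `u = F t` gives
`∫_{Iic x} p F^(p-1) dμ = ∫_0^(F x) p u^(p-1) du = F(x)^p`: the measure with density
`p F^(p-1)` has distribution function `F^p`, and `p = 1/k` gives `ν`.
-/

open ProbabilityTheory Set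

theorem setLIntegral_Icc_mul_rpow_sub_one {p c : ℝ} (hp : 0 < p) (hc : 0 ≤ c) :
    ∫⁻ u in Icc 0 c, ENNReal.ofReal (p * u ^ (p - 1)) = ENNReal.ofReal (c ^ p) := by
  have hr : -1 < p - 1 := by linarith
  have hint : IntegrableOn (fun u : ℝ ↦ p * u ^ (p - 1)) (Ioc 0 c) :=
    ((intervalIntegrable_iff_integrableOn_Ioc_of_le hc).1
      (intervalIntegral.intervalIntegrable_rpow' hr)).const_mul p
  have hnonneg : 0 ≤ᵐ[volume.restrict (Ioc 0 c)] fun u : ℝ ↦ p * u ^ (p - 1) :=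
    (ae_restrict_iff' measurableSet_Ioc).2 <| .of_forall fun u hu ↦
      mul_nonneg hp.le (Real.rpow_nonneg hu.1.le _)
  rw [← setLIntegral_congr Ioc_ae_eq_Icc, ← ofReal_integral_eq_lintegral_ofReal hint hnonneg,
    ← intervalIntegral.integral_of_le hc, intervalIntegral.integral_const_mul,
    integral_rpow (.inl hr), sub_add_cancel, Real.zero_rpow hp.ne', sub_zero,
    mul_div_cancel₀ _ hp.ne']

namespace ProbabilityTheory

theorem measurable_cdf (μ : Measure ℝ) : Measurable (cdf μ) := (monotone_cdf μ).measurable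

variable {μ : Measure ℝ} [IsProbabilityMeasure μ]

theorem measure_Ici_eq_ofReal_one_sub_cdf [NullSingletonClass μ] (x : ℝ) :
    μ (Ici x) = ENNReal.ofReal (1 - cdf μ x) := by
  rw [← measure_congr Ioi_ae_eq_Ici, ← compl_Iic, prob_compl_eq_one_sub measurableSet_Iic,
    ← ofReal_cdf, ENNReal.ofReal_sub _ (cdf_nonneg μ x), ENNReal.ofReal_one]

theorem measure_cdf_preimage_Iic_le (y : ℝ) : μ (cdf μ ⁻¹' Iic y) ≤ ENNReal.ofReal y := by
  rw [(measurable_cdf μ measurableSet_Iic).measure_eq_iSup_isCompact]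
  refine iSup₂_le fun K hKy ↦ iSup_le fun hK ↦ ?_
  rcases K.eq_empty_or_nonempty with rfl | hne
  · simp
  calc μ K ≤ μ (Iic (sSup K)) := measure_mono fun t ht ↦ le_csSup hK.bddAbove ht
    _ = ENNReal.ofReal (cdf μ (sSup K)) := (ofReal_cdf μ _).symm
    _ ≤ ENNReal.ofReal y := ENNReal.ofReal_le_ofReal (hKy (hK.sSup_mem hne))

theorem measure_cdf_preimage_Ioi_le [NullSingletonClass μ] (y : ℝ) :
    μ (cdf μ ⁻¹' Ioi y) ≤ ENNReal.ofReal (1 - y) := by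
  rw [(measurable_cdf μ measurableSet_Ioi).measure_eq_iSup_isCompact]
  refine iSup₂_le fun K hKy ↦ iSup_le fun hK ↦ ?_
  rcases K.eq_empty_or_nonempty with rfl | hne
  · simp
  calc μ K ≤ μ (Ici (sInf K)) := measure_mono fun t ht ↦ csInf_le hK.bddBelow ht
    _ = ENNReal.ofReal (1 - cdf μ (sInf K)) := measure_Ici_eq_ofReal_one_sub_cdf _
    _ ≤ ENNReal.ofReal (1 - y) :=
      ENNReal.ofReal_le_ofReal (sub_le_sub_left (hKy (hK.sInf_mem hne)).le 1)

theorem measure_cdf_preimage_Iic [NullSingletonClass μ] {y : ℝ} (hy₀ : 0 ≤ y) (hy₁ : y ≤ 1) :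
    μ (cdf μ ⁻¹' Iic y) = ENNReal.ofReal y := by
  refine le_antisymm (measure_cdf_preimage_Iic_le y) ?_
  have hy : ENNReal.ofReal y ≤ 1 := ENNReal.ofReal_le_one.2 hy₁
  have hcompl := measure_cdf_preimage_Ioi_le (μ := μ) y
  rwa [← compl_Iic, preimage_compl, prob_compl_eq_one_sub (measurable_cdf μ measurableSet_Iic),
    ENNReal.ofReal_sub _ hy₀, ENNReal.ofReal_one,
    ENNReal.sub_le_sub_iff_left hy ENNReal.one_ne_top] at hcompl

theorem map_cdf [NullSingletonClass μ] : μ.map (cdf μ) = volume.restrict (Icc 0 1) := by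
  have := Measure.isProbabilityMeasure_map (measurable_cdf μ).aemeasurable (μ := μ)
  refine Measure.ext_of_Iic _ _ fun y ↦ ?_
  rw [Measure.map_apply (measurable_cdf μ) measurableSet_Iic,
    Measure.restrict_apply measurableSet_Iic]
  have hIcc : Iic y ∩ Icc 0 1 = Icc 0 (min y 1) := by
    ext u; simp only [mem_inter_iff, mem_Iic, mem_Icc, le_min_iff]; tauto
  rw [hIcc, Real.volume_Icc, sub_zero]
  rcases lt_or_ge y 0 with hy₀ | hy₀
  · rw [ENNReal.ofReal_of_nonpos (min_le_of_left_le hy₀.le)]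
    exact le_antisymm
      ((measure_cdf_preimage_Iic_le y).trans_eq (ENNReal.ofReal_of_nonpos hy₀.le)) bot_le
  rcases le_or_gt y 1 with hy₁ | hy₁
  · rw [min_eq_left hy₁, measure_cdf_preimage_Iic hy₀ hy₁]
  · rw [min_eq_right hy₁.le, ENNReal.ofReal_one,
      eq_univ_of_forall (α := ℝ) (s := cdf μ ⁻¹' Iic y) fun t ↦ (cdf_le_one μ t).trans hy₁.le,
      measure_univ]

theorem setLIntegral_comp_cdf [NullSingletonClass μ] {B : Set ℝ} (hB : MeasurableSet B)
    {g : ℝ → ℝ≥0∞} (hg : Measurable g) :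
    ∫⁻ t in cdf μ ⁻¹' B, g (cdf μ t) ∂μ = ∫⁻ u in B ∩ Icc 0 1, g u := by
  rw [← setLIntegral_map hB hg (measurable_cdf μ), map_cdf, Measure.restrict_restrict hB]

theorem Iic_ae_eq_cdf_preimage_Iic (x : ℝ) : Iic x =ᵐ[μ] cdf μ ⁻¹' Iic (cdf μ x) :=
  ae_eq_of_subset_of_measure_ge (fun _ ht ↦ monotone_cdf μ ht)
    ((measure_cdf_preimage_Iic_le _).trans_eq (ofReal_cdf μ x)) measurableSet_Iic.nullMeasurableSet
    (measure_ne_top μ _)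

variable [NullSingletonClass μ] {p : ℝ}

theorem withDensity_rpow_cdf_Iic (hp : 0 < p) (x : ℝ) :
    μ.withDensity (fun t ↦ ENNReal.ofReal (p * cdf μ t ^ (p - 1))) (Iic x) =
      ENNReal.ofReal (cdf μ x ^ p) := by
  have hg : Measurable fun u : ℝ ↦ ENNReal.ofReal (p * u ^ (p - 1)) := by fun_prop
  have hIcc : Iic (cdf μ x) ∩ Icc 0 1 = Icc 0 (cdf μ x) := by
    have := cdf_le_one μ x
    ext u; simp only [mem_inter_iff, mem_Iic, mem_Icc]; grind
  rw [withDensity_apply _ measurableSet_Iic, setLIntegral_congr (Iic_ae_eq_cdf_preimage_Iic x),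
    setLIntegral_comp_cdf measurableSet_Iic hg, hIcc,
    setLIntegral_Icc_mul_rpow_sub_one hp (cdf_nonneg μ x)]

theorem isProbabilityMeasure_withDensity_rpow_cdf (hp : 0 < p) :
    IsProbabilityMeasure (μ.withDensity fun t ↦ ENNReal.ofReal (p * cdf μ t ^ (p - 1))) := by
  have hg : Measurable fun u : ℝ ↦ ENNReal.ofReal (p * u ^ (p - 1)) := by fun_prop
  constructor
  rw [withDensity_apply _ MeasurableSet.univ, ← preimage_univ (f := cdf μ),
    setLIntegral_comp_cdf MeasurableSet.univ hg, univ_inter,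
    setLIntegral_Icc_mul_rpow_sub_one hp zero_le_one, Real.one_rpow, ENNReal.ofReal_one]

theorem cdf_withDensity_rpow_cdf (hp : 0 < p) (x : ℝ) :
    cdf (μ.withDensity fun t ↦ ENNReal.ofReal (p * cdf μ t ^ (p - 1))) x = cdf μ x ^ p := by
  have := isProbabilityMeasure_withDensity_rpow_cdf (μ := μ) hp
  rw [cdf_eq_real, measureReal_def, withDensity_rpow_cdf_Iic hp,
    ENNReal.toReal_ofReal (Real.rpow_nonneg (cdf_nonneg μ x) p)]

end ProbabilityTheory

theorem cdf'_eq_cdf (μ : Measure ℝ) [IsProbabilityMeasure μ] : cdf' μ = cdf μ :=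
  funext fun x ↦ (cdf_eq_real μ x).symm

/-- **Density of `μ^{1/k}` with respect to `μ`.**
If `μ` is an atomless probability measure on `ℝ` with distribution function `F`, `k ≥ 1`,
and `ν` is the probability measure with distribution function `F^{1/k}`, then `ν` is
absolutely continuous with respect to `μ` with density `x ↦ (1/k) F(x)^{1/k - 1}`:
for every Borel set `A`, `ν(A) = ∫_A (1/k) F(x)^{1/k - 1} dμ(x)`.
(The density vanishes on the `μ`-null set `{F = 0}` when `k ≥ 2`, by convention on `rpow`.) -/
theorem kth_root_measure_withDensity (μ : Measure ℝ) [IsProbabilityMeasure μ] [NullSingletonClass μ]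
    (k : ℕ) (hk : 1 ≤ k) (ν : Measure ℝ) [IsProbabilityMeasure ν]
    (hν : ∀ x : ℝ, cdf' ν x = cdf' μ x ^ ((1 : ℝ) / k)) :
    ∀ A : Set ℝ, MeasurableSet A →
      ν A = ∫⁻ x in A, ENNReal.ofReal ((1 / (k : ℝ)) * cdf' μ x ^ ((1 : ℝ) / k - 1)) ∂μ := by
  have hp : (0 : ℝ) < 1 / k := one_div_pos.2 (by exact_mod_cast hk)
  have := isProbabilityMeasure_withDensity_rpow_cdf (μ := μ) hp
  have hνμ : ν = μ.withDensity fun x ↦ ENNReal.ofReal (1 / (k : ℝ) * cdf μ x ^ ((1 : ℝ) / k - 1)) :=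
    Measure.eq_of_cdf _ _ <| StieltjesFunction.ext fun x ↦ by
      rw [cdf_withDensity_rpow_cdf hp, ← cdf'_eq_cdf, hν, cdf'_eq_cdf]
  intro A hA
  rw [hνμ, withDensity_apply _ hA, cdf'_eq_cdf]
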